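/- arXiv:2109.14015 — 7 statements merged into one kernel-verified Lean document; each statement's English description precedes it below -/
import Mathlib

section
/- Let R be a ring satisfying Bass's stable rank condition (SR_r) and let n ≥ r. Then the subgroup EL_n(R) of GL_n(R) generated by elementary matrices acts transitively on the set of unimodular vectors in R^n. -/
open Matrix

/-- A vector `v ∈ Rⁿ` is *unimodular* if some homomorphism of right `R`-modules
`φ : Rⁿ → R` sends it to `1`.  Right `R`-modules are encoded as modules over `Rᵐᵒᵖ`. -/
def IsUnimodular {n : ℕ} (R : Type) [Ring R] (v : Fin n → R) : Prop :=
  ∃ φ : (Fin n → R) →ₗ[Rᵐᵒᵖ] R, φ v = 1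

/-- Bass's stable rank condition `(SR_r)`: for all `n ≥ r` and every unimodular
`(c₁, …, cₙ) ∈ Rⁿ` there are `b₁, …, b_{n-1} ∈ R` such that
`(c₁ + b₁ cₙ, …, c_{n-1} + b_{n-1} cₙ)` is unimodular. -/
def SatisfiesSR (R : Type) [Ring R] (r : ℕ) : Prop :=
  ∀ n : ℕ, r ≤ n + 1 → ∀ c : Fin (n + 1) → R, IsUnimodular R c →
    ∃ b : Fin n → R,
      IsUnimodular R (fun i : Fin n => c i.castSucc + b i * c (Fin.last n))

/-- An elementary matrix differs from the identity at exactly one off-diagonal entry. -/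
def IsElementaryMatrix {R : Type} [Ring R] {n : ℕ} (A : Matrix (Fin n) (Fin n) R) : Prop :=
  ∃ i j : Fin n, i ≠ j ∧ ∃ x : R, A = 1 + Matrix.single i j x

/-- `EL_n(R)`: the subgroup of `GL_n(R)` generated by the elementary matrices. -/
def ElementarySubgroup (R : Type) [Ring R] (n : ℕ) : Subgroup ((Matrix (Fin n) (Fin n) R)ˣ) :=
  Subgroup.closure {M : (Matrix (Fin n) (Fin n) R)ˣ | IsElementaryMatrix M.val}

/-!
Elementary operations move every unimodular `v ∈ Rⁿ` to the last basis vector `eₙ`. By `(SR_r)`,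
adding right multiples of `vₙ` to the other coordinates makes the truncation `u ∈ Rⁿ⁻¹` unimodular.
A relation `∑ aᵢ uᵢ = 1` then lets us add `(1 - vₙ) ∑ aᵢ uᵢ` to the last coordinate, making it `1`,
and this `1` clears all other coordinates.
-/

open MulAction

theorem MulAction.mem_orbit_trans {G α : Type*} [Group G] [MulAction G α] {a b c : α}
    (hab : b ∈ orbit G a) (hbc : c ∈ orbit G b) : c ∈ orbit G a := by
  rw [← orbit_eq_iff] at hab hbc ⊢
  exact hbc.trans hab

section

variable {R : Type} [Ring R]

theorem IsUnimodular.exists_dotProduct_eq_one {k : ℕ} {u : Fin k → R} (h : IsUnimodular R u) :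
    ∃ a : Fin k → R, a ⬝ᵥ u = 1 := by
  obtain ⟨φ, hφ⟩ := h
  have hu : u = ∑ i, MulOpposite.op (u i) • Pi.single i (1 : R) := by
    funext j
    simp [Finset.sum_apply, Pi.single_apply, MulOpposite.smul_eq_mul_unop]
  have hφu : φ u = ∑ i, φ (Pi.single i 1) * u i := by
    conv_lhs => rw [hu]
    simp [map_sum, MulOpposite.smul_eq_mul_unop]
  exact ⟨_, hφu.symm.trans hφ⟩

namespace ElementarySubgroup

theorem update_add_mul_mem_orbit {N : ℕ} {i j : Fin N} (hij : i ≠ j) (a : R) (v : Fin N → R) :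
    Function.update v i (v i + a * v j) ∈ orbit (ElementarySubgroup R N) v := by
  have hnil : IsNilpotent (single i j a) :=
    ⟨2, by rw [pow_two]; exact single_mul_single_of_ne a i j i hij.symm a⟩
  have hg : hnil.isUnit_one_add.unit ∈ ElementarySubgroup R N :=
    Subgroup.subset_closure ⟨i, j, hij, a, hnil.isUnit_one_add.unit_spec⟩
  refine ⟨⟨_, hg⟩, ?_⟩
  -- the action comes from `Module (Matrix n n R) (n → R)`, whose scalar action is `mulVec`
  change (1 + single i j a) *ᵥ v = _
  ext k
  rcases eq_or_ne k i with rfl | hk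
  · simp [add_mulVec, single_mulVec]
  · simp [add_mulVec, single_mulVec, hk]

variable {m : ℕ}

theorem snoc_add_mul_last_mem_orbit (c u : Fin m → R) (x : R) :
    Fin.snoc (fun i => u i + c i * x) x ∈
      orbit (ElementarySubgroup R (m + 1)) (Fin.snoc u x : Fin (m + 1) → R) := by
  induction c using Pi.single_induction generalizing u with
  | zero => simp
  | add c d hc hd =>
    refine mem_orbit_trans (hc u) ?_
    simpa only [Pi.add_apply, add_mul, add_assoc] using hd (fun i => u i + c i * x)
  | single i a =>
    convert update_add_mul_mem_orbit (Fin.castSucc_lt_last i).ne a (Fin.snoc u x : Fin (m + 1) → R)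
    rw [Fin.snoc_castSucc, Fin.snoc_last, ← Fin.snoc_update]
    congr 1
    ext k
    rcases eq_or_ne k i with rfl | hk
    · simp
    · simp [hk]

theorem snoc_add_dotProduct_mem_orbit (c u : Fin m → R) (x : R) :
    Fin.snoc u (x + c ⬝ᵥ u) ∈
      orbit (ElementarySubgroup R (m + 1)) (Fin.snoc u x : Fin (m + 1) → R) := by
  induction c using Pi.single_induction generalizing x with
  | zero => simp
  | add c d hc hd =>
    rw [add_dotProduct, ← add_assoc]
    exact mem_orbit_trans (hc x) (hd _)
  | single i a =>
    convert update_add_mul_mem_orbit (Fin.castSucc_lt_last i).ne' a (Fin.snoc u x : Fin (m + 1) → R)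
    rw [Fin.snoc_castSucc, Fin.snoc_last, Fin.update_snoc_last, single_dotProduct]

theorem snoc_zero_one_mem_orbit_of_isUnimodular {r : ℕ} (hSR : SatisfiesSR R r) (hr : r ≤ m + 1)
    {v : Fin (m + 1) → R} (hv : IsUnimodular R v) :
    Fin.snoc 0 1 ∈ orbit (ElementarySubgroup R (m + 1)) v := by
  obtain ⟨b, hb⟩ := hSR m hr v hv
  set u : Fin m → R := fun i => v i.castSucc + b i * v (Fin.last m)
  obtain ⟨a, ha⟩ := hb.exists_dotProduct_eq_one
  have hx : v (Fin.last m) + ((1 - v (Fin.last m)) • a) ⬝ᵥ u = 1 := by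
    rw [smul_dotProduct, ha, smul_eq_mul, mul_one, add_sub_cancel]
  have hv_u : Fin.snoc u (v (Fin.last m)) ∈ orbit (ElementarySubgroup R (m + 1)) v := by
    have h := snoc_add_mul_last_mem_orbit b (Fin.init v) (v (Fin.last m))
    rwa [Fin.snoc_init_self] at h
  have hu_1 : Fin.snoc u 1 ∈
      orbit (ElementarySubgroup R (m + 1)) (Fin.snoc u (v (Fin.last m)) : Fin (m + 1) → R) := by
    have h := snoc_add_dotProduct_mem_orbit ((1 - v (Fin.last m)) • a) u (v (Fin.last m))
    rwa [hx] at h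
  have h1_e :
      Fin.snoc 0 1 ∈ orbit (ElementarySubgroup R (m + 1)) (Fin.snoc u 1 : Fin (m + 1) → R) := by
    simpa [Pi.zero_def] using snoc_add_mul_last_mem_orbit (-u) u 1
  exact mem_orbit_trans hv_u (mem_orbit_trans hu_1 h1_e)

end ElementarySubgroup

end

/-- If `R` satisfies `(SR_r)` and `n ≥ r`, then `EL_n(R)` acts transitively on the
unimodular vectors in `Rⁿ` (acting on column vectors on the left). -/
theorem elementarySubgroup_transitive_on_unimodular (R : Type) [Ring R] (r n : ℕ)
    (hSR : SatisfiesSR R r) (hn : r ≤ n) (v w : Fin n → R)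
    (hv : IsUnimodular R v) (hw : IsUnimodular R w) :
    ∃ M ∈ ElementarySubgroup R n, M.val.mulVec v = w := by
  cases n with
  | zero => exact ⟨1, one_mem _, Subsingleton.elim _ _⟩
  | succ m =>
    obtain ⟨g, hg⟩ : w ∈ orbit (ElementarySubgroup R (m + 1)) v :=
      mem_orbit_trans (ElementarySubgroup.snoc_zero_one_mem_orbit_of_isUnimodular hSR hn hv)
        (mem_orbit_symm.mp (ElementarySubgroup.snoc_zero_one_mem_orbit_of_isUnimodular hSR hn hw))
    exact ⟨g, g.2, hg⟩
end

section
/- Let R be a ring satisfying (SR_r), let n ≥ r, let x, y ∈ R^n be unimodular vectors, and let C, D ⊆ R^n be right R-submodules with R^n = C ⊕ x·R and R^n = D ⊕ y·R. Then there exists M ∈ EL_n(R) with M·x = y and M·C = D. -/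
open Matrix

/-!
A complement `C` of `x·R` with `x` unimodular is the kernel of a row `a` with `a·x = 1`, so it
suffices that `EL_n(R)` acts transitively on such pairs `(x, a)` via `(x, a) ↦ (Mx, aM⁻¹)`.
Stable rank moves any unimodular `x` to `eₙ` by three batches of elementary operations: make
`(x₁, …, x_{n-1})` unimodular, then make the last coordinate `1`, then clear the others. The
stabiliser of `x` contains every transvection `1 + x c` with `c·x = 0`, since conjugating by a
matrix sending `x` to `eₙ` turns it into a product of elementary matrices supported on the last
row; such a transvection takes `a` to any other `a'` with `a'·x = 1`.
-/

section Unimodular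

variable {R : Type} [Ring R] {n : ℕ}

theorem LinearMap.apply_eq_dotProduct (φ : (Fin n → R) →ₗ[Rᵐᵒᵖ] R) (v : Fin n → R) :
    φ v = (fun j => φ (Pi.single j (1 : R))) ⬝ᵥ v := by
  conv_lhs => rw [← Finset.univ_sum_single v]
  refine (map_sum φ _ _).trans (Finset.sum_congr rfl fun j _ => ?_)
  have : (Pi.single j (v j) : Fin n → R)
      = MulOpposite.op (v j) • (Pi.single j 1 : Fin n → R) := by
    rw [← Pi.single_smul', MulOpposite.smul_eq_mul_unop, MulOpposite.unop_op, one_mul]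
  rw [this, map_smul, MulOpposite.smul_eq_mul_unop, MulOpposite.unop_op]

theorem isUnimodular_iff_exists_dotProduct_eq_one (v : Fin n → R) :
    IsUnimodular R v ↔ ∃ a : Fin n → R, a ⬝ᵥ v = 1 := by
  constructor
  · rintro ⟨φ, hφ⟩
    exact ⟨_, (φ.apply_eq_dotProduct v).symm.trans hφ⟩
  · rintro ⟨a, ha⟩
    exact ⟨dotProductBilin R Rᵐᵒᵖ a, ha⟩

theorem exists_ker_eq_of_isCompl_span_singleton {M : Type} [AddCommGroup M] [Module Rᵐᵒᵖ M]
    {y : M} {φ₀ : M →ₗ[Rᵐᵒᵖ] R} (hφ₀ : φ₀ y = 1) {D : Submodule Rᵐᵒᵖ M}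
    (hD : IsCompl D (Submodule.span Rᵐᵒᵖ {y})) :
    ∃ φ : M →ₗ[Rᵐᵒᵖ] R, φ y = 1 ∧ LinearMap.ker φ = D := by
  have hy : y ∈ Submodule.span Rᵐᵒᵖ {y} := Submodule.mem_span_singleton_self y
  have hinj : LinearMap.ker (φ₀ ∘ₗ (Submodule.span Rᵐᵒᵖ {y}).subtype) = ⊥ := by
    refine LinearMap.ker_eq_bot'.mpr fun ⟨w, hw⟩ hφw => ?_
    obtain ⟨c, rfl⟩ := Submodule.mem_span_singleton.mp hw
    have hc : c.unop = 0 := by simpa [MulOpposite.smul_eq_mul_unop, hφ₀] using hφw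
    simp [show c = 0 from MulOpposite.unop_injective hc]
  refine ⟨φ₀ ∘ₗ (Submodule.span Rᵐᵒᵖ {y}).subtype ∘ₗ Submodule.projectionOnto _ _ hD.symm,
    ?_, ?_⟩
  · simpa [Submodule.projectionOnto_apply_left hD.symm ⟨y, hy⟩]
  · rw [← LinearMap.comp_assoc, LinearMap.ker_comp_of_ker_eq_bot _ hinj,
      Submodule.ker_projectionOnto]

theorem exists_dotProduct_eq_one_and_mem_iff {y : Fin n → R} (hy : IsUnimodular R y)
    {D : Submodule Rᵐᵒᵖ (Fin n → R)} (hD : IsCompl D (Submodule.span Rᵐᵒᵖ {y})) :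
    ∃ b : Fin n → R, b ⬝ᵥ y = 1 ∧ ∀ v, v ∈ D ↔ b ⬝ᵥ v = 0 := by
  obtain ⟨φ₀, hφ₀⟩ := hy
  obtain ⟨φ, hφy, rfl⟩ := exists_ker_eq_of_isCompl_span_singleton hφ₀ hD
  refine ⟨_, (φ.apply_eq_dotProduct y).symm.trans hφy, fun v => ?_⟩
  rw [LinearMap.mem_ker, φ.apply_eq_dotProduct]

end Unimodular

theorem Submonoid.one_add_sum_mem_of_mul_eq_zero {A ι : Type*} [Ring A] (S : Submonoid A)
    (N : ι → A) (s : Finset ι) (hN : ∀ i ∈ s, ∀ j ∈ s, N i * N j = 0)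
    (hS : ∀ i ∈ s, 1 + N i ∈ S) : 1 + ∑ i ∈ s, N i ∈ S := by
  classical
  induction s using Finset.induction_on with
  | empty => simp [S.one_mem]
  | insert a s ha ih =>
    have hprod : 1 + ∑ i ∈ insert a s, N i = (1 + N a) * (1 + ∑ i ∈ s, N i) := by
      have hzero : N a * ∑ i ∈ s, N i = 0 := by
        rw [Finset.mul_sum]
        exact Finset.sum_eq_zero fun i hi => hN a (s.mem_insert_self a) i (s.mem_insert_of_mem hi)
      rw [Finset.sum_insert ha, add_mul, one_mul, mul_add, mul_one, hzero]
      abel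
    rw [hprod]
    exact S.mul_mem (hS a (s.mem_insert_self a)) <|
      ih (fun i hi j hj => hN i (s.mem_insert_of_mem hi) j (s.mem_insert_of_mem hj))
        fun i hi => hS i (s.mem_insert_of_mem hi)

section Elementary

variable {R : Type} [Ring R] {n : ℕ}

variable (R n) in
def elementaryMatrices : Submonoid (Matrix (Fin n) (Fin n) R) :=
  (ElementarySubgroup R n).toSubmonoid.map (Units.coeHom _)

theorem val_mem_elementaryMatrices {M : (Matrix (Fin n) (Fin n) R)ˣ}
    (hM : M ∈ ElementarySubgroup R n) : M.val ∈ elementaryMatrices R n :=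
  ⟨M, hM, rfl⟩

theorem one_add_single_mem_elementaryMatrices {i j : Fin n} (hij : i ≠ j) (c : R) :
    1 + single i j c ∈ elementaryMatrices R n := by
  have hu : IsUnit (1 + single i j c) :=
    (IsNilpotent.isUnit_one_add ⟨2, by rw [sq, single_mul_single_of_ne _ _ _ _ hij.symm]⟩)
  exact ⟨hu.unit, Subgroup.subset_closure ⟨i, j, hij, c, hu.unit_spec⟩, hu.unit_spec⟩

theorem one_add_vecMulVec_single_right_mem_elementaryMatrices {u : Fin n → R} {k : Fin n}
    (hu : u k = 0) : 1 + vecMulVec u (Pi.single k 1) ∈ elementaryMatrices R n := by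
  have hsum : vecMulVec u (Pi.single k 1) = ∑ i, single i k (u i) := by
    ext a b
    simp [vecMulVec_apply, Matrix.sum_apply, single_apply, Pi.single_apply, ite_and, eq_comm]
  rw [hsum]
  refine Submonoid.one_add_sum_mem_of_mul_eq_zero _ _ _ (fun i _ j _ => ?_) fun i _ => ?_
  · obtain rfl | hkj := eq_or_ne k j
    · simp [hu]
    · exact single_mul_single_of_ne _ _ _ _ hkj _
  · obtain rfl | hik := eq_or_ne i k
    · simp [hu]
    · exact one_add_single_mem_elementaryMatrices hik _

theorem one_add_vecMulVec_single_left_mem_elementaryMatrices {u : Fin n → R} {k : Fin n}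
    (hu : u k = 0) : 1 + vecMulVec (Pi.single k 1) u ∈ elementaryMatrices R n := by
  have hsum : vecMulVec (Pi.single k 1) u = ∑ j, single k j (u j) := by
    ext a b
    simp [vecMulVec_apply, Matrix.sum_apply, single_apply, Pi.single_apply, ite_and, eq_comm]
  rw [hsum]
  refine Submonoid.one_add_sum_mem_of_mul_eq_zero _ _ _ (fun i _ j _ => ?_) fun i _ => ?_
  · obtain rfl | hik := eq_or_ne i k
    · simp [hu]
    · exact single_mul_single_of_ne _ _ _ _ hik _
  · obtain rfl | hki := eq_or_ne k i
    · simp [hu]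
    · exact one_add_single_mem_elementaryMatrices hki _

end Elementary

section Reduction

variable {R : Type} [Ring R] {m : ℕ}

theorem Fin.snoc_dotProduct_snoc (u v : Fin m → R) (s t : R) :
    (Fin.snoc u s : Fin (m + 1) → R) ⬝ᵥ Fin.snoc v t = u ⬝ᵥ v + s * t := by
  simp [dotProduct, Fin.sum_univ_castSucc]

theorem one_add_vecMulVec_snoc_single_last_mulVec_snoc (c v : Fin m → R) (t : R) :
    (1 + vecMulVec (Fin.snoc c 0) (Pi.single (Fin.last m) 1)) *ᵥ (Fin.snoc v t : Fin (m + 1) → R)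
      = Fin.snoc (v + MulOpposite.op t • c) t := by
  rw [add_mulVec, one_mulVec, vecMulVec_mulVec, single_one_dotProduct, Fin.snoc_last]
  ext i
  induction i using Fin.lastCases <;> simp

theorem one_add_vecMulVec_single_last_snoc_mulVec_snoc (w v : Fin m → R) (t : R) :
    (1 + vecMulVec (Pi.single (Fin.last m) 1) (Fin.snoc w 0)) *ᵥ (Fin.snoc v t : Fin (m + 1) → R)
      = Fin.snoc v (t + w ⬝ᵥ v) := by
  rw [add_mulVec, one_mulVec, vecMulVec_mulVec, Fin.snoc_dotProduct_snoc, zero_mul, add_zero]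
  ext i
  induction i using Fin.lastCases <;> simp

theorem exists_mem_elementarySubgroup_mulVec_eq_single_last {r : ℕ} (hSR : SatisfiesSR R r)
    (hr : r ≤ m + 1) {x : Fin (m + 1) → R} (hx : IsUnimodular R x) :
    ∃ F ∈ ElementarySubgroup R (m + 1), F.val *ᵥ x = Pi.single (Fin.last m) 1 := by
  obtain ⟨b, hb⟩ := hSR m hr x hx
  obtain ⟨a, ha⟩ := (isUnimodular_iff_exists_dotProduct_eq_one _).mp hb
  set t := x (Fin.last m)
  set u : Fin m → R := Fin.init x + MulOpposite.op t • b
  have h₁ : (1 + vecMulVec (Fin.snoc b 0) (Pi.single (Fin.last m) 1)) *ᵥ x = Fin.snoc u t := by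
    rw [← Fin.snoc_init_self x, one_add_vecMulVec_snoc_single_last_mulVec_snoc]
  have h₂ : (1 + vecMulVec (Pi.single (Fin.last m) 1) (Fin.snoc ((1 - t) • a) 0)) *ᵥ
      (Fin.snoc u t : Fin (m + 1) → R) = Fin.snoc u 1 := by
    rw [one_add_vecMulVec_single_last_snoc_mulVec_snoc, smul_dotProduct, smul_eq_mul,
      show a ⬝ᵥ u = 1 from ha, mul_one, add_sub_cancel]
  have h₃ : (1 + vecMulVec (Fin.snoc (-u) 0) (Pi.single (Fin.last m) 1)) *ᵥ
      (Fin.snoc u 1 : Fin (m + 1) → R) = Pi.single (Fin.last m) 1 := by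
    rw [one_add_vecMulVec_snoc_single_last_mulVec_snoc, MulOpposite.op_one, one_smul,
      add_neg_cancel]
    ext i
    induction i using Fin.lastCases <;> simp
  have hA : (1 + vecMulVec (Fin.snoc (-u) 0) (Pi.single (Fin.last m) 1)) *
      (1 + vecMulVec (Pi.single (Fin.last m) 1) (Fin.snoc ((1 - t) • a) 0)) *
      (1 + vecMulVec (Fin.snoc b 0) (Pi.single (Fin.last m) 1)) ∈ elementaryMatrices R (m + 1) :=
    mul_mem (mul_mem (one_add_vecMulVec_single_right_mem_elementaryMatrices (Fin.snoc_last _ _))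
      (one_add_vecMulVec_single_left_mem_elementaryMatrices (Fin.snoc_last _ _)))
      (one_add_vecMulVec_single_right_mem_elementaryMatrices (Fin.snoc_last _ _))
  obtain ⟨F, hF, hFA⟩ := hA
  refine ⟨F, hF, ?_⟩
  rw [Units.coeHom_apply] at hFA
  rw [hFA, ← mulVec_mulVec, ← mulVec_mulVec, h₁, h₂, h₃]

end Reduction

section Transitivity

variable {R : Type} [Ring R] {n : ℕ}

theorem one_add_vecMulVec_mem_elementaryMatrices {F : (Matrix (Fin n) (Fin n) R)ˣ}
    (hF : F ∈ ElementarySubgroup R n) {x : Fin n → R} {k : Fin n}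
    (hFx : F.val *ᵥ x = Pi.single k 1) {a : Fin n → R} (hax : a ⬝ᵥ x = 0) :
    1 + vecMulVec x a ∈ elementaryMatrices R n := by
  have hx : F⁻¹.val *ᵥ Pi.single k 1 = x := by
    rw [← hFx, mulVec_mulVec, Units.inv_mul, one_mulVec]
  have hk : (a ᵥ* F⁻¹.val) k = 0 := by
    rw [← dotProduct_single_one (a ᵥ* F⁻¹.val), ← dotProduct_mulVec, hx, hax]
  have hconj : 1 + vecMulVec x a
      = F⁻¹.val * (1 + vecMulVec (Pi.single k 1) (a ᵥ* F⁻¹.val)) * F.val := by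
    rw [mul_add, mul_one, add_mul, Units.inv_mul, mul_vecMulVec, vecMulVec_mul, vecMul_vecMul,
      Units.inv_mul, vecMul_one, hx]
  rw [hconj]
  exact mul_mem (mul_mem (val_mem_elementaryMatrices (inv_mem hF))
    (one_add_vecMulVec_single_left_mem_elementaryMatrices hk)) (val_mem_elementaryMatrices hF)

theorem exists_mem_elementarySubgroup_mulVec_eq_self_vecMul_eq
    {F : (Matrix (Fin n) (Fin n) R)ˣ} (hF : F ∈ ElementarySubgroup R n) {x : Fin n → R}
    {k : Fin n} (hFx : F.val *ᵥ x = Pi.single k 1) {a a' : Fin n → R} (hax : a ⬝ᵥ x = 1)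
    (ha'x : a' ⬝ᵥ x = 1) :
    ∃ T ∈ ElementarySubgroup R n, T.val *ᵥ x = x ∧ a' ᵥ* T.val = a := by
  have hx : (a - a') ⬝ᵥ x = 0 := by rw [sub_dotProduct, hax, ha'x, sub_self]
  obtain ⟨T, hT, hTval⟩ := one_add_vecMulVec_mem_elementaryMatrices hF hFx hx
  rw [Units.coeHom_apply] at hTval
  refine ⟨T, hT, ?_, ?_⟩
  · rw [hTval, add_mulVec, one_mulVec, vecMulVec_mulVec, hx, MulOpposite.op_zero, zero_smul,
      add_zero]
  · rw [hTval, vecMul_add, vecMul_one, vecMul_vecMulVec, ha'x, one_smul, add_sub_cancel]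

theorem exists_mem_elementarySubgroup_mulVec_eq_vecMul_eq {r : ℕ} (hSR : SatisfiesSR R r)
    (hn : r ≤ n) {x y a b : Fin n → R} (hax : a ⬝ᵥ x = 1) (hby : b ⬝ᵥ y = 1) :
    ∃ M ∈ ElementarySubgroup R n, M.val *ᵥ x = y ∧ b ᵥ* M.val = a := by
  obtain _ | m := n
  · exact ⟨1, one_mem _, Subsingleton.elim _ _, Subsingleton.elim _ _⟩
  obtain ⟨F, hF, hFx⟩ := exists_mem_elementarySubgroup_mulVec_eq_single_last hSR hn
    ((isUnimodular_iff_exists_dotProduct_eq_one x).mpr ⟨a, hax⟩)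
  obtain ⟨G, hG, hGy⟩ := exists_mem_elementarySubgroup_mulVec_eq_single_last hSR hn
    ((isUnimodular_iff_exists_dotProduct_eq_one y).mpr ⟨b, hby⟩)
  have hx : (G⁻¹ * F).val *ᵥ x = y := by
    rw [Units.val_mul, ← mulVec_mulVec, hFx, ← hGy, mulVec_mulVec, Units.inv_mul, one_mulVec]
  obtain ⟨T, hT, hTx, hTa⟩ := exists_mem_elementarySubgroup_mulVec_eq_self_vecMul_eq hF hFx hax
    (a' := b ᵥ* (G⁻¹ * F).val) (by rw [← dotProduct_mulVec, hx, hby])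
  refine ⟨G⁻¹ * F * T, mul_mem (mul_mem (inv_mem hG) hF) hT, ?_, ?_⟩
  · rw [Units.val_mul _ T, ← mulVec_mulVec, hTx, hx]
  · rw [Units.val_mul _ T, ← vecMul_vecMul, hTa]

theorem image_mulVec_eq_of_vecMul_eq (M : (Matrix (Fin n) (Fin n) R)ˣ) {a b : Fin n → R}
    (h : b ᵥ* M.val = a) {C D : Set (Fin n → R)} (hC : ∀ v, v ∈ C ↔ a ⬝ᵥ v = 0)
    (hD : ∀ v, v ∈ D ↔ b ⬝ᵥ v = 0) :
    (fun u => M.val *ᵥ u) '' C = D := by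
  ext v
  constructor
  · rintro ⟨u, hu, rfl⟩
    rwa [hD, dotProduct_mulVec, h, ← hC]
  · intro hv
    refine ⟨M⁻¹.val *ᵥ v, ?_, by simp only [mulVec_mulVec, Units.mul_inv, one_mulVec]⟩
    rwa [hC, ← h, ← dotProduct_mulVec, mulVec_mulVec, Units.mul_inv, one_mulVec, ← hD]

end Transitivity

/-- If `R` satisfies `(SR_r)` and `n ≥ r`, and `x, y ∈ Rⁿ` are unimodular with complements
`C, D` (i.e. `Rⁿ = C ⊕ x·R` and `Rⁿ = D ⊕ y·R` as right `R`-modules), then some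
`M ∈ EL_n(R)` satisfies `M·x = y` and `M·C = D`. -/
theorem elementarySubgroup_transitive_on_split_unimodular (R : Type) [Ring R] (r n : ℕ)
    (hSR : SatisfiesSR R r) (hn : r ≤ n) (x y : Fin n → R)
    (hx : IsUnimodular R x) (hy : IsUnimodular R y)
    (C D : Submodule Rᵐᵒᵖ (Fin n → R))
    (hC : IsCompl C (Submodule.span Rᵐᵒᵖ {x}))
    (hD : IsCompl D (Submodule.span Rᵐᵒᵖ {y})) :
    ∃ M ∈ ElementarySubgroup R n, M.val.mulVec x = y ∧
      (fun u : Fin n → R => M.val.mulVec u) '' (C : Set (Fin n → R)) =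
        (D : Set (Fin n → R)) := by
  obtain ⟨a, hax, hCa⟩ := exists_dotProduct_eq_one_and_mem_iff hx hC
  obtain ⟨b, hby, hDb⟩ := exists_dotProduct_eq_one_and_mem_iff hy hD
  obtain ⟨M, hM, hMx, hMb⟩ := exists_mem_elementarySubgroup_mulVec_eq_vecMul_eq hSR hn hax hby
  exact ⟨M, hM, hMx, image_mulVec_eq_of_vecMul_eq M hMb hCa hDb⟩
end

section
/- Let R be a ring satisfying (SR_r) and let C be a right R-module such that C ⊕ R^k ≅ R^n as right R-modules, with k ≤ n - r + 1. Then C ≅ R^{n-k}. -/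
open Matrix

/-! If `P ⊕ R ≅ Rⁿ` with `n ≥ r`, the image `c` of the basis vector `(0, 1)` is unimodular.
The stable range condition shortens `c` to a unimodular `c' ∈ Rⁿ⁻¹`, and three shears of
`Rⁿ⁻¹ ⊕ R` then carry `c` to `(0, 1)`; an isomorphism `P ⊕ R ≅ Rⁿ⁻¹ ⊕ R` fixing the second
summand descends to `P ≅ Rⁿ⁻¹`. Peeling off the free summands one at a time gives the theorem. -/

section Shear

variable {S A B : Type*} [Semiring S] [AddCommGroup A] [AddCommGroup B] [Module S A] [Module S B]

def LinearEquiv.shearFst (f : B →ₗ[S] A) : (A × B) ≃ₗ[S] (A × B) :=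
  LinearEquiv.prodComm S A B ≪≫ₗ
    (LinearEquiv.refl S B).skewProd (LinearEquiv.refl S A) f ≪≫ₗ LinearEquiv.prodComm S B A

def LinearEquiv.shearSnd (f : A →ₗ[S] B) : (A × B) ≃ₗ[S] (A × B) :=
  (LinearEquiv.refl S A).skewProd (LinearEquiv.refl S B) f

@[simp]
theorem LinearEquiv.shearFst_apply (f : B →ₗ[S] A) (x : A × B) :
    shearFst f x = (x.1 + f x.2, x.2) :=
  rfl

@[simp]
theorem LinearEquiv.shearSnd_apply (f : A →ₗ[S] B) (x : A × B) :
    shearSnd f x = (x.1, x.2 + f x.1) :=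
  rfl

end Shear

def snocLinearEquiv (S M : Type*) [Semiring S] [AddCommMonoid M] [Module S M] (n : ℕ) :
    ((Fin n → M) × M) ≃ₗ[S] (Fin (n + 1) → M) where
  toFun p := Fin.snoc p.1 p.2
  invFun v := (Fin.init v, v (Fin.last n))
  map_add' p q := by ext i; refine Fin.lastCases ?_ (fun j => ?_) i <;> simp
  map_smul' a p := by ext i; refine Fin.lastCases ?_ (fun j => ?_) i <;> simp
  left_inv p := by simp
  right_inv := Fin.snoc_init_self

noncomputable def LinearEquiv.cancelProdRight {S P Q M : Type*} [Ring S] [AddCommGroup P]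
    [AddCommGroup Q] [AddCommGroup M] [Module S P] [Module S Q] [Module S M]
    (f : (P × M) ≃ₗ[S] (Q × M)) (hf : ∀ m, f (0, m) = (0, m)) : P ≃ₗ[S] Q :=
  (LinearMap.quotKerEquivOfSurjective (LinearMap.fst S P M) Prod.fst_surjective).symm ≪≫ₗ
    Submodule.Quotient.equiv _ _ f (by
      rw [LinearMap.ker_fst, LinearMap.ker_fst, ← LinearMap.range_comp]
      exact congrArg LinearMap.range (LinearMap.ext hf)) ≪≫ₗ
    LinearMap.quotKerEquivOfSurjective (LinearMap.fst S Q M) Prod.fst_surjective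

namespace SatisfiesSR

variable {R : Type} [Ring R] {r : ℕ}

theorem exists_linearEquiv_apply_eq (hSR : SatisfiesSR R r) {m : ℕ} (hr : r ≤ m + 1)
    {c : Fin (m + 1) → R} (hc : IsUnimodular R c) :
    ∃ α : (Fin (m + 1) → R) ≃ₗ[Rᵐᵒᵖ] (Fin m → R) × R, α c = (0, 1) := by
  obtain ⟨b, w, hw⟩ := hSR m hr c hc
  set c' : Fin m → R := fun i => c i.castSucc + b i * c (Fin.last m)
  let mulVec (v : Fin m → R) : R →ₗ[Rᵐᵒᵖ] (Fin m → R) := LinearMap.pi fun i => v i • LinearMap.id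
  -- `c ↦ (init c, c last) ↦ (c', c last) ↦ (c', 1) ↦ (0, 1)`
  refine ⟨(snocLinearEquiv Rᵐᵒᵖ R m).symm ≪≫ₗ LinearEquiv.shearFst (mulVec b) ≪≫ₗ
    LinearEquiv.shearSnd ((1 - c (Fin.last m)) • w) ≪≫ₗ LinearEquiv.shearFst (mulVec (-c')), ?_⟩
  have h₁ : LinearEquiv.shearFst (mulVec b) ((snocLinearEquiv Rᵐᵒᵖ R m).symm c) =
      (c', c (Fin.last m)) := by
    ext i <;> rfl
  have h₂ : LinearEquiv.shearSnd ((1 - c (Fin.last m)) • w) (c', c (Fin.last m)) = (c', 1) := by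
    simp [hw]
  simp only [LinearEquiv.trans_apply, h₁, h₂]
  ext i <;> simp [mulVec]

theorem nonempty_linearEquiv_of_prod_ring (hSR : SatisfiesSR R r) {n : ℕ} (hr : r ≤ n)
    {P : Type*} [AddCommGroup P] [Module Rᵐᵒᵖ P] (E : (P × R) ≃ₗ[Rᵐᵒᵖ] (Fin n → R)) :
    Nonempty (P ≃ₗ[Rᵐᵒᵖ] (Fin (n - 1) → R)) := by
  rcases n with _ | m
  · have : Subsingleton P := (E.injective.comp (LinearMap.inl_injective (R := Rᵐᵒᵖ))).subsingleton
    exact ⟨LinearEquiv.ofSubsingleton P (Fin 0 → R)⟩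
  · have hc : IsUnimodular R (E (0, 1)) := ⟨LinearMap.snd _ _ _ ∘ₗ E.symm.toLinearMap, by simp⟩
    obtain ⟨α, hα⟩ := hSR.exists_linearEquiv_apply_eq hr hc
    refine ⟨(E ≪≫ₗ α).cancelProdRight fun t => ?_⟩
    have ht : ((0 : P), t) = MulOpposite.op t • (0, 1) := by ext <;> simp
    rw [ht, map_smul, LinearEquiv.trans_apply, hα]
    ext <;> simp

end SatisfiesSR

/-- If `R` satisfies `(SR_r)` and `C` is a right `R`-module with `C ⊕ Rᵏ ≅ Rⁿ` and
`k ≤ n - r + 1`, then `C ≅ R^{n-k}`. -/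
theorem stablyFree_is_free (R : Type) [Ring R] (r n k : ℕ) (hSR : SatisfiesSR R r)
    (C : Type) [AddCommGroup C] [Module Rᵐᵒᵖ C]
    (hk : (k : ℤ) ≤ (n : ℤ) - (r : ℤ) + 1)
    (e : (C × (Fin k → R)) ≃ₗ[Rᵐᵒᵖ] (Fin n → R)) :
    Nonempty (C ≃ₗ[Rᵐᵒᵖ] (Fin (n - k) → R)) := by
  induction k generalizing n C with
  | zero => exact ⟨LinearEquiv.prodUnique.symm ≪≫ₗ e⟩
  | succ k ih =>
    let reassoc : (C × (Fin (k + 1) → R)) ≃ₗ[Rᵐᵒᵖ] (C × (Fin k → R)) × R :=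
      (LinearEquiv.refl _ C).prodCongr (snocLinearEquiv _ R k).symm ≪≫ₗ
        (LinearEquiv.prodAssoc _ C _ R).symm
    obtain ⟨f⟩ := hSR.nonempty_linearEquiv_of_prod_ring (by omega) (reassoc.symm ≪≫ₗ e)
    obtain ⟨g⟩ := ih (n - 1) C (by omega) f
    rw [show n - (k + 1) = n - 1 - k by omega]
    exact ⟨g⟩
end

section
/- Let R be a ring satisfying (SR_r), let q be a two-sided ideal of R, and let n ≥ r. Suppose (c_1, ..., c_n) ∈ R^n is a unimodular vector with c_n ∈ q. Then there exist b_1, ..., b_{n-1} ∈ q such that (c_1 + b_1 c_n, ..., c_{n-1} + b_{n-1} c_n) ∈ R^{n-1} is unimodular. -/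
open Matrix

/-!
Write `∑ aᵢ cᵢ = 1` and `t = aₙ cₙ ∈ q`. The vector `c'` obtained from `c` by replacing `cₙ`
with `cₙ aₙ cₙ` is still unimodular, since `(1 + t) ∑_{i<n} aᵢ cᵢ + aₙ (cₙ aₙ cₙ)
= (1 + t)(1 - t) + t² = 1`. Applying `(SR_r)` to `c'` gives `b` with `(cᵢ + bᵢ cₙ aₙ cₙ)ᵢ`
unimodular, so the coefficients `bᵢ cₙ aₙ` work, and they lie in `q` because `cₙ` does.
-/

section Unimodular

variable {R : Type} [Ring R]

open MulOpposite in
theorem isUnimodular_iff_exists_sum_mul_eq_one {n : ℕ} (v : Fin n → R) :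
    IsUnimodular R v ↔ ∃ a : Fin n → R, ∑ i, a i * v i = 1 := by
  constructor
  · rintro ⟨φ, hφ⟩
    refine ⟨fun i => φ (Pi.single i 1), ?_⟩
    have hv : v = ∑ i, op (v i) • Pi.single i (1 : R) := by
      conv_lhs => rw [← Finset.univ_sum_single v]
      simp only [← Pi.single_smul, op_smul_eq_mul, one_mul]
    calc ∑ i, φ (Pi.single i 1) * v i = φ v := by
          conv_rhs => rw [hv, map_sum]
          simp only [map_smul, op_smul_eq_mul]
      _ = 1 := hφ
  · rintro ⟨a, ha⟩
    refine ⟨⟨⟨fun w => ∑ i, a i * w i, fun w₁ w₂ => ?_⟩, fun x w => ?_⟩, ha⟩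
    · simp only [Pi.add_apply, mul_add, Finset.sum_add_distrib]
    · simp only [Pi.smul_apply, smul_eq_mul_unop, RingHom.id_apply, Finset.sum_mul, mul_assoc]

theorem isUnimodular_snoc_init_last_mul_mul_last {n : ℕ} {c a : Fin (n + 1) → R}
    (ha : ∑ i, a i * c i = 1) :
    IsUnimodular R (Fin.snoc (Fin.init c)
      (c (Fin.last n) * a (Fin.last n) * c (Fin.last n)) : Fin (n + 1) → R) := by
  set t := a (Fin.last n) * c (Fin.last n)
  set s := ∑ j : Fin n, a j.castSucc * c j.castSucc
  have hst : s + t = 1 := by rwa [Fin.sum_univ_castSucc] at ha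
  rw [isUnimodular_iff_exists_sum_mul_eq_one]
  refine ⟨Fin.snoc (fun j => (1 + t) * a j.castSucc) (a (Fin.last n)), ?_⟩
  simp only [Fin.sum_univ_castSucc, Fin.snoc_castSucc, Fin.snoc_last, Fin.init]
  calc ∑ j : Fin n, (1 + t) * a j.castSucc * c j.castSucc
          + a (Fin.last n) * (c (Fin.last n) * a (Fin.last n) * c (Fin.last n))
        = (1 + t) * s + t * t := by
          simp only [s, t, Finset.mul_sum, mul_assoc]
    _ = (1 + t) * (s + t) - t := by noncomm_ring
    _ = 1 := by rw [hst]; noncomm_ring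

end Unimodular

/-- Relative stable range condition: if `R` satisfies `(SR_r)`, `q` is a two-sided ideal,
`n ≥ r` (the vector has length `n + 1 ≥ r`), and `(c₁, …, cₙ)` is unimodular with
`cₙ ∈ q`, then one can choose the shortening coefficients `b₁, …, b_{n-1}` inside `q`. -/
theorem satisfiesSR_relative_ideal (R : Type) [Ring R] (r n : ℕ) (hSR : SatisfiesSR R r)
    (q : TwoSidedIdeal R) (hn : r ≤ n + 1) (c : Fin (n + 1) → R)
    (hc : IsUnimodular R c) (hlast : c (Fin.last n) ∈ q) :
    ∃ b : Fin n → R, (∀ i, b i ∈ q) ∧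
      IsUnimodular R (fun i : Fin n => c i.castSucc + b i * c (Fin.last n)) := by
  obtain ⟨a, ha⟩ := (isUnimodular_iff_exists_sum_mul_eq_one c).mp hc
  obtain ⟨b, hb⟩ := hSR n hn _ (isUnimodular_snoc_init_last_mul_mul_last ha)
  refine ⟨fun i => b i * c (Fin.last n) * a (Fin.last n),
    fun i => q.mul_mem_right _ _ (q.mul_mem_left _ _ hlast), ?_⟩
  simpa only [Fin.snoc_castSucc, Fin.snoc_last, Fin.init, mul_assoc] using hb
end

section
/- Let V be a vector space over a field k, let G be an abelian group, and suppose G acts k-linearly on V. If a generating set S of G acts on V via unipotent operators, then every element of G acts on V via a unipotent operator. -/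
/-!
If `a - 1` and `b - 1` are nilpotent and `a`, `b` commute, then
`a * b - 1 = (a - 1) * b + (b - 1)` is a sum of two commuting nilpotents, and
`a⁻¹ - 1 = -a⁻¹ * (a - 1)` is nilpotent too. So in a commutative group the elements
acting unipotently form a subgroup, which contains the generators and hence everything.
-/

section Ring

variable {R : Type*} [Ring R]

theorem Commute.isNilpotent_mul_sub_one {a b : R} (hab : Commute a b)
    (ha : IsNilpotent (a - 1)) (hb : IsNilpotent (b - 1)) : IsNilpotent (a * b - 1) := by
  have hsplit : a * b - 1 = (a - 1) * b + (b - 1) := by noncomm_ring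
  have hab' : Commute (a - 1) b := hab.sub_left (Commute.one_left b)
  have hcomm : Commute ((a - 1) * b) (b - 1) :=
    (hab'.sub_right (Commute.one_right _)).mul_left
      ((Commute.refl b).sub_right (Commute.one_right b))
  rw [hsplit]
  exact hcomm.isNilpotent_add (hab'.isNilpotent_mul_right ha) hb

theorem Commute.isNilpotent_sub_one_of_mul_eq_one {a b : R} (hab : Commute a b) (hba : b * a = 1)
    (ha : IsNilpotent (a - 1)) : IsNilpotent (b - 1) := by
  have hsplit : b - 1 = -(b * (a - 1)) := by rw [mul_sub, hba]; noncomm_ring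
  rw [hsplit]
  exact ((hab.symm.sub_right (Commute.one_right b)).isNilpotent_mul_left ha).neg

variable {G : Type*} [CommGroup G]

def MonoidHom.unipotentSubgroup (f : G →* R) : Subgroup G where
  carrier := {g | IsNilpotent (f g - 1)}
  one_mem' := by simp
  mul_mem' {a b} ha hb := by
    rw [Set.mem_ofPred_eq, map_mul]
    exact ((Commute.all a b).map f).isNilpotent_mul_sub_one ha hb
  inv_mem' {a} ha :=
    ((Commute.all a a⁻¹).map f).isNilpotent_sub_one_of_mul_eq_one
      (by rw [← map_mul, inv_mul_cancel, map_one]) ha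

end Ring

/-- If an abelian group `G` acts `k`-linearly on a vector space `V` and a generating set
`S` of `G` acts via unipotent operators (identity plus nilpotent), then every element of
`G` acts via a unipotent operator. -/
theorem unipotent_of_generators (k : Type) [Field k] (V : Type) [AddCommGroup V]
    [Module k V] (G : Type) [CommGroup G] (ρ : G →* (V ≃ₗ[k] V)) (S : Set G)
    (hS : Subgroup.closure S = ⊤)
    (h : ∀ s ∈ S, IsNilpotent (((ρ s).toLinearMap : Module.End k V) - 1)) :
    ∀ g : G, IsNilpotent (((ρ g).toLinearMap : Module.End k V) - 1) := by
  intro g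
  have hle : Subgroup.closure S ≤
      (LinearEquiv.automorphismGroup.toLinearMapMonoidHom.comp ρ).unipotentSubgroup :=
    (Subgroup.closure_le _).2 h
  exact hle (hS ▸ Subgroup.mem_top g)
end

section
/- Let M be a right R-module over a ring R, and suppose {(x_0, C_0), ..., (x_k, C_k)} is a k-simplex of the complex of split partial bases of M: each x_i ∈ M is nonzero, each C_i ⊆ M is a submodule with M = C_i ⊕ x_i·R, and x_i ∈ C_j for all i ≠ j. Then, setting C = C_0 ∩ ... ∩ C_k, one has M = C ⊕ x_0·R ⊕ ... ⊕ x_k·R. -/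
/-- If `{(x₀, C₀), …, (x_k, C_k)}` is a simplex of the complex of split partial bases of a
right `R`-module `M` (each `xᵢ ≠ 0`, `M = Cᵢ ⊕ xᵢ·R`, and `xᵢ ∈ Cⱼ` for `i ≠ j`), then
`M = (C₀ ∩ ⋯ ∩ C_k) ⊕ x₀·R ⊕ ⋯ ⊕ x_k·R` (an internal direct sum).  Right `R`-modules are
encoded as modules over `Rᵐᵒᵖ`. -/
theorem split_partial_basis_simplex_decomposition (R : Type) [Ring R] (M : Type)
    [AddCommGroup M] [Module Rᵐᵒᵖ M] (k : ℕ) (x : Fin (k + 1) → M)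
    (C : Fin (k + 1) → Submodule Rᵐᵒᵖ M)
    (hx : ∀ i, x i ≠ 0)
    (hcompl : ∀ i, IsCompl (C i) (Submodule.span Rᵐᵒᵖ {x i}))
    (hmem : ∀ i j, i ≠ j → x i ∈ C j) :
    DirectSum.IsInternal (fun o : Option (Fin (k + 1)) =>
      o.elim (⨅ i, C i) fun i => Submodule.span Rᵐᵒᵖ {x i}) := by
  classical
  set S : Fin (k + 1) → Submodule Rᵐᵒᵖ M := fun i => Submodule.span Rᵐᵒᵖ {x i} with hS
  have hSC : ∀ i j, i ≠ j → S i ≤ C j := fun i j hij =>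
    Submodule.span_le.mpr (Set.singleton_subset_iff.mpr (hmem i j hij))
  -- supremum is ⊤
  have hsup : ∀ s : Finset (Fin (k + 1)),
      (⨅ i ∈ s, C i) ⊔ (⨆ i ∈ s, S i) = ⊤ := by
    intro s
    induction s using Finset.induction_on with
    | empty => simp
    | @insert j s hjs ih =>
      rw [Finset.iInf_insert, Finset.iSup_insert]
      have hB : (⨆ i ∈ s, S i) ≤ C j := by
        refine iSup₂_le fun i hi => hSC i j ?_
        rintro rfl; exact hjs hi
      calc (C j ⊓ ⨅ i ∈ s, C i) ⊔ (S j ⊔ ⨆ i ∈ s, S i)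
          = S j ⊔ (((⨅ i ∈ s, C i) ⊓ C j) ⊔ ⨆ i ∈ s, S i) := by
            rw [inf_comm]; ac_rfl
        _ = S j ⊔ (((⨅ i ∈ s, C i) ⊔ ⨆ i ∈ s, S i) ⊓ C j) := by
            rw [sup_comm ((⨅ i ∈ s, C i) ⊓ C j) (⨆ i ∈ s, S i), ← sup_inf_assoc_of_le _ hB,
              sup_comm (⨆ i ∈ s, S i) (⨅ i ∈ s, C i)]
        _ = ⊤ := by rw [ih, top_inf_eq, sup_comm, (hcompl j).sup_eq_top]
  -- disjointness of the infimum and the span parts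
  have hdisj : Disjoint (⨅ i, C i) (⨆ i, S i) := by
    rw [Submodule.disjoint_def]
    intro y hyN hyS
    rw [Submodule.mem_iSup_iff_exists_finsupp] at hyS
    obtain ⟨f, hf, hfsum⟩ := hyS
    have hfz : ∀ j, f j = 0 := by
      intro j
      have hsum' : (f.sum fun _ xi => xi) = ∑ i, f i := Finsupp.sum_fintype _ _ fun _ => rfl
      have hyeq : y = f j + ∑ i ∈ Finset.univ.erase j, f i := by
        rw [← hfsum, hsum', ← Finset.add_sum_erase _ _ (Finset.mem_univ j)]
      have hrest : (∑ i ∈ Finset.univ.erase j, f i) ∈ C j := by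
        refine Submodule.sum_mem _ fun i hi => ?_
        exact hSC i j (Finset.ne_of_mem_erase hi) (hf i)
      have hfjC : f j ∈ C j := by
        have : f j = y - ∑ i ∈ Finset.univ.erase j, f i := by rw [hyeq]; abel
        rw [this]
        exact Submodule.sub_mem _ (Submodule.mem_iInf _ |>.mp hyN j) hrest
      exact (Submodule.disjoint_def.mp (hcompl j).disjoint) _ hfjC (hf j)
    have : y = 0 := by
      rw [← hfsum, Finsupp.sum_fintype _ _ fun _ => rfl]
      exact Finset.sum_eq_zero fun i _ => hfz i
    exact this
  rw [DirectSum.isInternal_submodule_iff_iSupIndep_and_iSup_eq_top]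
  constructor
  · intro o
    cases o with
    | none =>
      refine Disjoint.mono_right ?_ hdisj
      refine iSup₂_le fun o ho => ?_
      cases o with
      | none => exact absurd rfl ho
      | some i => exact le_iSup S i
    | some j =>
      have hle : (⨆ (o : Option (Fin (k+1))) (_ : o ≠ some j),
          o.elim (⨅ i, C i) fun i => S i) ≤ C j := by
        refine iSup₂_le fun o ho => ?_
        cases o with
        | none => exact iInf_le C j
        | some i =>
          refine hSC i j ?_
          rintro rfl; exact ho rfl
      exact Disjoint.mono_right hle (hcompl j).disjoint.symm
  · rw [iSup_option_elim]
    have := hsup Finset.univ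
    simpa using this
end

section
/- Let R be a ring satisfying (SR_r), n ≥ r, and let x, y ∈ R^n be unimodular with R^n = C ⊕ x·R = D ⊕ y·R for submodules C, D ⊆ R^n. Let q be a two-sided ideal of R and suppose x and y have the same image in (R/q)^n and C and D have the same image in (R/q)^n. Then there exists M ∈ EL_n(R, q) with M·x = y and M·C = D. -/
open Matrix

/-- An elementary matrix whose single off-diagonal entry lies in the two-sided ideal `q`. -/
def IsQElementaryMatrix {R : Type} [Ring R] (q : TwoSidedIdeal R) {n : ℕ}
    (A : Matrix (Fin n) (Fin n) R) : Prop :=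
  ∃ i j : Fin n, i ≠ j ∧ ∃ x : R, x ∈ q ∧ A = 1 + Matrix.single i j x

/-- `EL_n(R, q)`: the subgroup of `EL_n(R)` normally generated (in `EL_n(R)`) by the
elementary matrices whose off-diagonal entry lies in `q`; equivalently, the subgroup
generated by all `EL_n(R)`-conjugates of such elementary matrices. -/
def CongruenceElementarySubgroup (R : Type) [Ring R] (n : ℕ) (q : TwoSidedIdeal R) :
    Subgroup (Matrix (Fin n) (Fin n) R)ˣ :=
  Subgroup.closure {g : (Matrix (Fin n) (Fin n) R)ˣ |
    ∃ e : (Matrix (Fin n) (Fin n) R)ˣ, IsQElementaryMatrix q e.val ∧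
      ∃ h ∈ ElementarySubgroup R n, g = h * e * h⁻¹}

/-!
Under `(SR_r)` a unimodular vector is moved to `e₀` by `EL_n(R)`: shorten it with the stable
range condition, make the last coordinate `1 - y₀` by a row operation, add it to the first
coordinate, and clear the others by a column operation. When the vector is already `≡ e₀ mod q`
the row and column operations have coefficients in `q`, and the two remaining moves fix `e₀`, so
conjugation (`EL_n(R)` normalises `EL_n(R, q)`) keeps everything in `EL_n(R, q)`. Transporting by
an element of `EL_n(R)` sending `y` to `e₀` gives `M₁ ∈ EL_n(R, q)` with `M₁ x = y`.

A complement of `y R` is the kernel of a functional `δ` with `δ y = 1`. For two such functionals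
the transvection `v ↦ v + y (δ₁ - δ₂) v` fixes `y` and maps `ker δ₁` onto `ker δ₂`. Since `M₁ C`
and `D` agree mod `q`, `δ₁ - δ₂` has values in `q`; and a transvection `1 + y g` with `g y = 0`
and `g ≡ 0 mod q` lies in `EL_n(R, q)`, because moving `y` to `e₀` turns it into a product of
`q`-elementary matrices.
-/

section Functionals

variable {R : Type*} [Ring R] {ι : Type*} [Fintype ι] [DecidableEq ι]

def coeffVec (φ : (ι → R) →ₗ[Rᵐᵒᵖ] R) : ι → R := fun i => φ (Pi.single i 1)

theorem coeffVec_dotProduct (φ : (ι → R) →ₗ[Rᵐᵒᵖ] R) (v : ι → R) : coeffVec φ ⬝ᵥ v = φ v := by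
  conv_rhs => rw [← Finset.univ_sum_single v]
  simp only [map_sum, dotProduct, coeffVec]
  refine Finset.sum_congr rfl fun i _ => ?_
  rw [← op_smul_eq_mul, ← map_smul]
  congr 1
  ext j
  by_cases hj : j = i <;> simp [hj]

theorem mk'_eq_mk'_iff (q : TwoSidedIdeal R) {a b : R} :
    q.ringCon.mk' a = q.ringCon.mk' b ↔ a - b ∈ q :=
  (RingCon.eq _).trans (q.rel_iff _ _)

theorem apply_mem_of_forall_mem (q : TwoSidedIdeal R) (φ : (ι → R) →ₗ[Rᵐᵒᵖ] R) {v : ι → R}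
    (hv : ∀ i, v i ∈ q) : φ v ∈ q := by
  rw [← coeffVec_dotProduct]
  exact sum_mem fun i _ => q.mul_mem_left _ _ (hv i)

end Functionals

section RankOneTransvection

variable {R : Type*} [Ring R] {ι : Type*} [Fintype ι]

theorem vecMulVec_mul_self {u w : ι → R} (h : w ⬝ᵥ u = 0) : vecMulVec u w * vecMulVec u w = 0 := by
  rw [vecMulVec_mul_vecMulVec, h, zero_smul, vecMulVec_zero]

variable [DecidableEq ι]

def rankOneTransvection (u w : ι → R) (h : w ⬝ᵥ u = 0) : (Matrix ι ι R)ˣ where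
  val := 1 + vecMulVec u w
  inv := 1 - vecMulVec u w
  val_inv := by rw [add_mul, mul_sub, mul_sub, vecMulVec_mul_self h]; abel_nf; simp
  inv_val := by rw [sub_mul, mul_add, mul_add, vecMulVec_mul_self h]; abel_nf; simp

variable {u w : ι → R} (h : w ⬝ᵥ u = 0)

theorem rankOneTransvection_val : (rankOneTransvection u w h).val = 1 + vecMulVec u w := rfl

theorem rankOneTransvection_mulVec (v : ι → R) :
    (rankOneTransvection u w h).val *ᵥ v = v + MulOpposite.op (w ⬝ᵥ v) • u := by
  rw [rankOneTransvection_val, add_mulVec, one_mulVec, vecMulVec_mulVec]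

theorem rankOneTransvection_inv_mulVec (v : ι → R) :
    (rankOneTransvection u w h)⁻¹.val *ᵥ v = v - MulOpposite.op (w ⬝ᵥ v) • u := by
  show (1 - vecMulVec u w) *ᵥ v = _
  rw [sub_mulVec, one_mulVec, vecMulVec_mulVec]

theorem rankOneTransvection_mulVec_eq_self {v : ι → R} (hv : w ⬝ᵥ v = 0) :
    (rankOneTransvection u w h).val *ᵥ v = v := by
  rw [rankOneTransvection_mulVec, hv, MulOpposite.op_zero, zero_smul, add_zero]

theorem rankOneTransvection_zero_right (h : (0 : ι → R) ⬝ᵥ u = 0) :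
    rankOneTransvection u 0 h = 1 :=
  Units.ext <| by rw [rankOneTransvection_val, vecMulVec_zero, add_zero, Units.val_one]

theorem rankOneTransvection_zero_left (h : w ⬝ᵥ (0 : ι → R) = 0) :
    rankOneTransvection 0 w h = 1 :=
  Units.ext <| by rw [rankOneTransvection_val, zero_vecMulVec, add_zero, Units.val_one]

theorem rankOneTransvection_add_right {w₁ w₂ : ι → R} (h₁ : w₁ ⬝ᵥ u = 0) (h₂ : w₂ ⬝ᵥ u = 0)
    (h : (w₁ + w₂) ⬝ᵥ u = 0) :
    rankOneTransvection u (w₁ + w₂) h = rankOneTransvection u w₁ h₁ * rankOneTransvection u w₂ h₂ :=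
  Units.ext <| by
    simp only [Units.val_mul, rankOneTransvection_val, add_mul, mul_add, mul_one, one_mul,
      vecMulVec_mul_vecMulVec, h₁, zero_smul, vecMulVec_zero, vecMulVec_add]
    abel

theorem rankOneTransvection_add_left {u₁ u₂ : ι → R} (h₁ : w ⬝ᵥ u₁ = 0) (h₂ : w ⬝ᵥ u₂ = 0)
    (h : w ⬝ᵥ (u₁ + u₂) = 0) :
    rankOneTransvection (u₁ + u₂) w h = rankOneTransvection u₁ w h₁ * rankOneTransvection u₂ w h₂ :=
  Units.ext <| by
    simp only [Units.val_mul, rankOneTransvection_val, add_mul, mul_add, mul_one, one_mul,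
      vecMulVec_mul_vecMulVec, h₂, zero_smul, vecMulVec_zero, add_vecMulVec]
    abel

theorem conj_rankOneTransvection (F : (Matrix ι ι R)ˣ) :
    F * rankOneTransvection u w h * F⁻¹ = rankOneTransvection (F.val *ᵥ u) (w ᵥ* F⁻¹.val)
      (by rw [← dotProduct_mulVec, mulVec_mulVec, Units.inv_mul, one_mulVec, h]) :=
  Units.ext <| by
    simp only [Units.val_mul, rankOneTransvection_val, mul_add, add_mul, mul_one, F.mul_inv,
      mul_vecMulVec, vecMulVec_mul]

end RankOneTransvection

section ElementarySubgroups

variable {R : Type} [Ring R] {n : ℕ} (q : TwoSidedIdeal R)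

theorem congruenceElementarySubgroup_le_elementarySubgroup :
    CongruenceElementarySubgroup R n q ≤ ElementarySubgroup R n := by
  refine Subgroup.closure_le _ |>.mpr ?_
  rintro _ ⟨e, ⟨i, j, hij, c, -, he⟩, h, hh, rfl⟩
  have heE : e ∈ ElementarySubgroup R n := Subgroup.subset_closure ⟨i, j, hij, c, he⟩
  exact mul_mem (mul_mem hh heE) (inv_mem hh)

theorem conj_mem_congruenceElementarySubgroup {h M : (Matrix (Fin n) (Fin n) R)ˣ}
    (hh : h ∈ ElementarySubgroup R n) (hM : M ∈ CongruenceElementarySubgroup R n q) :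
    h * M * h⁻¹ ∈ CongruenceElementarySubgroup R n q := by
  have hmap : (CongruenceElementarySubgroup R n q).map (MulAut.conj h).toMonoidHom ≤
      CongruenceElementarySubgroup R n q := by
    rw [CongruenceElementarySubgroup, MonoidHom.map_closure, Subgroup.closure_le]
    rintro _ ⟨_, ⟨e, he, k, hk, rfl⟩, rfl⟩
    exact Subgroup.subset_closure ⟨e, he, h * k, mul_mem hh hk, by simp [mul_assoc]⟩
  exact hmap ⟨M, hM, rfl⟩

theorem map_mk'_eq_one_of_mem_congruenceElementarySubgroup {M : (Matrix (Fin n) (Fin n) R)ˣ}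
    (hM : M ∈ CongruenceElementarySubgroup R n q) : M.val.map q.ringCon.mk' = 1 := by
  let reduce := Units.map (q.ringCon.mk'.mapMatrix (m := Fin n)).toMonoidHom
  suffices CongruenceElementarySubgroup R n q ≤ reduce.ker from congrArg Units.val (this hM)
  refine Subgroup.closure_le _ |>.mpr ?_
  rintro _ ⟨e, ⟨i, j, -, c, hc, he⟩, h, -, rfl⟩
  have hc' : q.ringCon.mk' c = 0 := by
    rw [← map_zero q.ringCon.mk', mk'_eq_mk'_iff, sub_zero]
    exact hc
  have he' : reduce e = 1 := Units.ext <| by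
    change q.ringCon.mk'.mapMatrix e.val = 1
    rw [he, map_add, map_one, RingHom.mapMatrix_apply, map_single, hc',
      single_zero, add_zero]
  simp [he']

theorem mk'_comp_mulVec (A : Matrix (Fin n) (Fin n) R) (v : Fin n → R) :
    q.ringCon.mk' ∘ (A *ᵥ v) = A.map q.ringCon.mk' *ᵥ (q.ringCon.mk' ∘ v) :=
  funext <| RingHom.map_mulVec _ _ _

theorem mk'_comp_mulVec_of_mem {M : (Matrix (Fin n) (Fin n) R)ˣ}
    (hM : M ∈ CongruenceElementarySubgroup R n q) (v : Fin n → R) :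
    q.ringCon.mk' ∘ (M.val *ᵥ v) = q.ringCon.mk' ∘ v := by
  rw [mk'_comp_mulVec, map_mk'_eq_one_of_mem_congruenceElementarySubgroup q hM, one_mulVec]

theorem mk'_comp_mulVec_congr (A : Matrix (Fin n) (Fin n) R) {v w : Fin n → R}
    (h : q.ringCon.mk' ∘ v = q.ringCon.mk' ∘ w) :
    q.ringCon.mk' ∘ (A *ᵥ v) = q.ringCon.mk' ∘ (A *ᵥ w) := by
  rw [mk'_comp_mulVec, h, ← mk'_comp_mulVec]

theorem image_reduce_image_mulVec_of_mem {M : (Matrix (Fin n) (Fin n) R)ˣ}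
    (hM : M ∈ CongruenceElementarySubgroup R n q) (S : Set (Fin n → R)) :
    (fun (u : Fin n → R) (i : Fin n) => (u i : q.ringCon.Quotient)) '' ((M.val *ᵥ ·) '' S) =
      (fun (u : Fin n → R) (i : Fin n) => (u i : q.ringCon.Quotient)) '' S := by
  rw [Set.image_image]
  exact Set.image_congr fun v _ => mk'_comp_mulVec_of_mem q hM v

end ElementarySubgroups

section RankOneTransvectionMem

variable {R : Type*} [Ring R] {ι κ : Type*} [Fintype ι] [DecidableEq ι]

theorem rankOneTransvection_sum_right_mem (G : Subgroup (Matrix ι ι R)ˣ) (u : ι → R)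
    (s : Finset κ) (f : κ → ι → R) (hf : ∀ k ∈ s, f k ⬝ᵥ u = 0)
    (hG : ∀ k ∈ s, ∀ h, rankOneTransvection u (f k) h ∈ G) (h : (∑ k ∈ s, f k) ⬝ᵥ u = 0) :
    rankOneTransvection u (∑ k ∈ s, f k) h ∈ G :=
  (Finset.sum_induction f (fun w => w ⬝ᵥ u = 0 ∧ ∀ h, rankOneTransvection u w h ∈ G)
    (fun _ _ ⟨h₁, hG₁⟩ ⟨h₂, hG₂⟩ => ⟨by rw [add_dotProduct, h₁, h₂, add_zero], fun _ => by
      rw [rankOneTransvection_add_right h₁ h₂]; exact mul_mem (hG₁ h₁) (hG₂ h₂)⟩)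
    ⟨zero_dotProduct u, fun _ => by rw [rankOneTransvection_zero_right]; exact one_mem G⟩
    fun k hk => ⟨hf k hk, hG k hk⟩).2 h

theorem rankOneTransvection_sum_left_mem (G : Subgroup (Matrix ι ι R)ˣ) (w : ι → R)
    (s : Finset κ) (f : κ → ι → R) (hf : ∀ k ∈ s, w ⬝ᵥ f k = 0)
    (hG : ∀ k ∈ s, ∀ h, rankOneTransvection (f k) w h ∈ G) (h : w ⬝ᵥ ∑ k ∈ s, f k = 0) :
    rankOneTransvection (∑ k ∈ s, f k) w h ∈ G :=
  (Finset.sum_induction f (fun u => w ⬝ᵥ u = 0 ∧ ∀ h, rankOneTransvection u w h ∈ G)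
    (fun _ _ ⟨h₁, hG₁⟩ ⟨h₂, hG₂⟩ => ⟨by rw [dotProduct_add, h₁, h₂, add_zero], fun _ => by
      rw [rankOneTransvection_add_left h₁ h₂]; exact mul_mem (hG₁ h₁) (hG₂ h₂)⟩)
    ⟨dotProduct_zero w, fun _ => by rw [rankOneTransvection_zero_left]; exact one_mem G⟩
    fun k hk => ⟨hf k hk, hG k hk⟩).2 h

end RankOneTransvectionMem

section ElementaryTransvections

variable {R : Type} [Ring R] {n : ℕ} (q : TwoSidedIdeal R)

theorem vecMulVec_single_one_single (i j : Fin n) (c : R) :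
    vecMulVec (Pi.single i 1) (Pi.single j c) = single i j c := by
  ext k l
  by_cases hk : k = i <;> by_cases hl : l = j <;> simp [vecMulVec_apply, hk, hl, Ne.symm]

theorem vecMulVec_single_single_one (i j : Fin n) (c : R) :
    vecMulVec (Pi.single i c) (Pi.single j 1) = single i j c := by
  ext k l
  by_cases hk : k = i <;> by_cases hl : l = j <;> simp [vecMulVec_apply, hk, hl, Ne.symm]

theorem rankOneTransvection_single_left_mem (i : Fin n) (w : Fin n → R) (hw : ∀ k, w k ∈ q)
    (h : w ⬝ᵥ Pi.single i 1 = 0) :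
    rankOneTransvection (Pi.single i 1) w h ∈ CongruenceElementarySubgroup R n q := by
  have hwi : (Pi.single i (w i) : Fin n → R) = 0 := by
    rw [← dotProduct_single_one w i, h, Pi.single_zero]
  have hsum : ∑ k ∈ Finset.univ.erase i, (Pi.single k (w k) : Fin n → R) = w := by
    rw [Finset.sum_erase (f := fun k => Pi.single k (w k)) _ hwi, Finset.univ_sum_single]
  revert h
  rw [← hsum]
  refine rankOneTransvection_sum_right_mem _ _ _ _ (fun k hk => ?_) (fun k hk h => ?_)
  · rw [single_dotProduct, Pi.single_eq_of_ne (Finset.ne_of_mem_erase hk), mul_zero]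
  · refine Subgroup.subset_closure ⟨rankOneTransvection _ _ h,
      ⟨i, k, (Finset.ne_of_mem_erase hk).symm, w k, hw k, ?_⟩, 1, one_mem _, by group⟩
    rw [rankOneTransvection_val, vecMulVec_single_one_single]

theorem rankOneTransvection_single_right_mem (j : Fin n) (u : Fin n → R) (hu : ∀ k, u k ∈ q)
    (h : Pi.single j 1 ⬝ᵥ u = 0) :
    rankOneTransvection u (Pi.single j 1) h ∈ CongruenceElementarySubgroup R n q := by
  have huj : (Pi.single j (u j) : Fin n → R) = 0 := by
    rw [← single_one_dotProduct j u, h, Pi.single_zero]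
  have hsum : ∑ k ∈ Finset.univ.erase j, (Pi.single k (u k) : Fin n → R) = u := by
    rw [Finset.sum_erase (f := fun k => Pi.single k (u k)) _ huj, Finset.univ_sum_single]
  revert h
  rw [← hsum]
  refine rankOneTransvection_sum_left_mem _ _ _ _ (fun k hk => ?_) (fun k hk h => ?_)
  · rw [single_one_dotProduct, Pi.single_eq_of_ne (Finset.ne_of_mem_erase hk).symm]
  · refine Subgroup.subset_closure ⟨rankOneTransvection _ _ h,
      ⟨k, j, Finset.ne_of_mem_erase hk, u k, hu k, ?_⟩, 1, one_mem _, by group⟩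
    rw [rankOneTransvection_val, vecMulVec_single_single_one]

theorem rankOneTransvection_single_left_mem_elementarySubgroup (i : Fin n) (w : Fin n → R)
    (h : w ⬝ᵥ Pi.single i 1 = 0) :
    rankOneTransvection (Pi.single i 1) w h ∈ ElementarySubgroup R n :=
  congruenceElementarySubgroup_le_elementarySubgroup ⊤
    (rankOneTransvection_single_left_mem ⊤ i w (fun _ => TwoSidedIdeal.mem_top R) h)

theorem rankOneTransvection_single_right_mem_elementarySubgroup (j : Fin n) (u : Fin n → R)
    (h : Pi.single j 1 ⬝ᵥ u = 0) :
    rankOneTransvection u (Pi.single j 1) h ∈ ElementarySubgroup R n :=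
  congruenceElementarySubgroup_le_elementarySubgroup ⊤
    (rankOneTransvection_single_right_mem ⊤ j u (fun _ => TwoSidedIdeal.mem_top R) h)

end ElementaryTransvections

theorem SatisfiesSR.two_le {R : Type} [Ring R] [Nontrivial R] {r : ℕ} (h : SatisfiesSR R r) :
    2 ≤ r := by
  by_contra! hr
  obtain ⟨b, φ, hφ⟩ := h 0 (by omega) (fun _ => 1) ⟨LinearMap.proj 0, rfl⟩
  exact zero_ne_one ((map_zero φ).symm.trans ((congrArg φ (Subsingleton.elim _ _)).trans hφ))

section Orbits

variable {R : Type} [Ring R] {n : ℕ} (q : TwoSidedIdeal R)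

def CongruenceOrbitRel (v w : Fin n → R) : Prop :=
  ∃ M ∈ CongruenceElementarySubgroup R n q, M.val *ᵥ v = w

namespace CongruenceOrbitRel

variable {q}

theorem of_mem {M : (Matrix (Fin n) (Fin n) R)ˣ} (hM : M ∈ CongruenceElementarySubgroup R n q)
    (v : Fin n → R) : CongruenceOrbitRel q v (M.val *ᵥ v) :=
  ⟨M, hM, rfl⟩

theorem trans {u v w : Fin n → R} (huv : CongruenceOrbitRel q u v)
    (hvw : CongruenceOrbitRel q v w) : CongruenceOrbitRel q u w := by
  obtain ⟨M, hM, rfl⟩ := huv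
  obtain ⟨N, hN, rfl⟩ := hvw
  exact ⟨N * M, mul_mem hN hM, by rw [Units.val_mul, mulVec_mulVec]⟩

theorem of_conj {F : (Matrix (Fin n) (Fin n) R)ˣ} (hF : F ∈ ElementarySubgroup R n)
    {v w : Fin n → R} (h : CongruenceOrbitRel q (F.val *ᵥ v) (F.val *ᵥ w)) :
    CongruenceOrbitRel q v w := by
  obtain ⟨M, hM, hMv⟩ := h
  refine ⟨F⁻¹ * M * F⁻¹⁻¹, conj_mem_congruenceElementarySubgroup q (inv_mem hF) hM, ?_⟩
  rw [inv_inv, Units.val_mul, Units.val_mul, ← mulVec_mulVec, ← mulVec_mulVec, hMv,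
    mulVec_mulVec, Units.inv_mul, one_mulVec]

end CongruenceOrbitRel

theorem congruenceOrbitRel_single_of_apply_eq_one {i : Fin n} {y : Fin n → R} (hyi : y i = 1)
    (hyq : q.ringCon.mk' ∘ y = q.ringCon.mk' ∘ Pi.single i 1) :
    CongruenceOrbitRel q y (Pi.single i 1) := by
  have h : Pi.single i 1 ⬝ᵥ (Pi.single i 1 - y) = 0 := by
    rw [single_one_dotProduct, Pi.sub_apply, Pi.single_eq_same, hyi, sub_self]
  have hU := rankOneTransvection_single_right_mem q i (Pi.single i 1 - y)
    (fun k => (mk'_eq_mk'_iff q).mp (congrFun hyq k).symm) h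
  refine ⟨_, hU, ?_⟩
  rw [rankOneTransvection_mulVec, single_one_dotProduct, hyi, MulOpposite.op_one, one_smul,
    add_sub_cancel]

theorem congruenceOrbitRel_single_of_isUnimodular_castSucc {m : ℕ} {y : Fin (m + 2) → R}
    (hy : IsUnimodular R fun i : Fin (m + 1) => y i.castSucc)
    (hyq : q.ringCon.mk' ∘ y = q.ringCon.mk' ∘ Pi.single 0 1) :
    CongruenceOrbitRel q y (Pi.single 0 1) := by
  set L := Fin.last (m + 1)
  have h0L : (0 : Fin (m + 2)) ≠ L := Fin.last_pos'.ne
  obtain ⟨φ, hφ⟩ := hy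
  have ha : coeffVec φ ⬝ᵥ (fun i : Fin (m + 1) => y i.castSucc) = 1 := by
    rw [coeffVec_dotProduct, hφ]
  set c := 1 - y 0 - y L
  have hc : c ∈ q := by
    have h0 := (mk'_eq_mk'_iff q).mp (congrFun hyq 0)
    have hL := (mk'_eq_mk'_iff q).mp (congrFun hyq L)
    simp only [Pi.single_eq_same, Pi.single_eq_of_ne h0L.symm, sub_zero] at h0 hL
    have hc' : c = -(y 0 - 1) - y L := by simp only [c]; abel
    rw [hc']
    exact q.sub_mem (q.neg_mem h0) hL
  set w : Fin (m + 2) → R := Fin.snoc (fun i => c * coeffVec φ i) 0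
  have hwL : w ⬝ᵥ Pi.single L 1 = 0 := by rw [dotProduct_single_one]; exact Fin.snoc_last ..
  have hwy : w ⬝ᵥ y = c := by
    rw [dotProduct, Fin.sum_univ_castSucc]
    simp only [w, Fin.snoc_castSucc, Fin.snoc_last, zero_mul, add_zero, mul_assoc,
      ← Finset.mul_sum]
    rw [← dotProduct, ha, mul_one]
  have hU₂ := rankOneTransvection_single_left_mem q L w
    (fun k => Fin.lastCases (by simp [w])
      (fun i => by simpa [w] using q.mul_mem_right _ _ hc) k) hwL
  have hy₂ : (rankOneTransvection (Pi.single L 1) w hwL).val *ᵥ y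
      = y + MulOpposite.op c • (Pi.single L 1 : Fin (m + 2) → R) := by
    rw [rankOneTransvection_mulVec, hwy]
  have he : Pi.single L (1 : R) ⬝ᵥ Pi.single 0 1 = 0 := by
    rw [dotProduct_single_one, Pi.single_eq_of_ne h0L]
  have hU₃ := rankOneTransvection_single_left_mem_elementarySubgroup 0 _ he
  refine (CongruenceOrbitRel.of_mem hU₂ y).trans (CongruenceOrbitRel.of_conj hU₃ ?_)
  have hfix := rankOneTransvection_mulVec_eq_self he he
  rw [hfix]
  apply congruenceOrbitRel_single_of_apply_eq_one
  · rw [rankOneTransvection_mulVec, single_one_dotProduct, hy₂]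
    simp [Pi.single_eq_of_ne h0L, c]
  · conv_rhs => rw [← hfix]
    exact mk'_comp_mulVec_congr q _ ((mk'_comp_mulVec_of_mem q hU₂ y).trans hyq)

theorem congruenceOrbitRel_single_of_isUnimodular {r m : ℕ} (hSR : SatisfiesSR R r)
    (hm : r ≤ m + 2) {y : Fin (m + 2) → R} (hy : IsUnimodular R y)
    (hyq : q.ringCon.mk' ∘ y = q.ringCon.mk' ∘ Pi.single 0 1) :
    CongruenceOrbitRel q y (Pi.single 0 1) := by
  obtain ⟨b, hb⟩ := hSR (m + 1) hm y hy
  set L := Fin.last (m + 1)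
  have hbL : Pi.single L 1 ⬝ᵥ (Fin.snoc b 0 : Fin (m + 2) → R) = 0 := by
    rw [single_one_dotProduct]; exact Fin.snoc_last ..
  have he : Pi.single L (1 : R) ⬝ᵥ Pi.single 0 1 = 0 := by
    rw [dotProduct_single_one, Pi.single_eq_of_ne Fin.last_pos'.ne]
  have hU := rankOneTransvection_single_right_mem_elementarySubgroup L _ hbL
  have hfix := rankOneTransvection_mulVec_eq_self hbL he
  refine CongruenceOrbitRel.of_conj hU ?_
  rw [hfix]
  apply congruenceOrbitRel_single_of_isUnimodular_castSucc
  · convert hb using 2 with i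
    rw [rankOneTransvection_mulVec, single_one_dotProduct]
    simp [Fin.snoc_castSucc, L]
  · conv_rhs => rw [← hfix]
    exact mk'_comp_mulVec_congr q _ hyq

theorem exists_mem_elementarySubgroup_mulVec_eq_single {r m : ℕ} (hSR : SatisfiesSR R r)
    (hm : r ≤ m + 2) {y : Fin (m + 2) → R} (hy : IsUnimodular R y) :
    ∃ F ∈ ElementarySubgroup R (m + 2), F.val *ᵥ y = Pi.single 0 1 := by
  obtain ⟨F, hF, hFy⟩ := congruenceOrbitRel_single_of_isUnimodular ⊤ hSR hm hy
    (funext fun _ => (mk'_eq_mk'_iff ⊤).mpr (TwoSidedIdeal.mem_top R))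
  exact ⟨F, congruenceElementarySubgroup_le_elementarySubgroup ⊤ hF, hFy⟩

theorem IsUnimodular.mulVec {v : Fin n → R} (hv : IsUnimodular R v)
    (F : (Matrix (Fin n) (Fin n) R)ˣ) : IsUnimodular R (F.val *ᵥ v) := by
  obtain ⟨φ, hφ⟩ := hv
  refine ⟨φ ∘ₗ mulVecBilin R Rᵐᵒᵖ F⁻¹.val, ?_⟩
  rw [LinearMap.comp_apply, mulVecBilin_apply, mulVec_mulVec, Units.inv_mul, one_mulVec, hφ]

theorem congruenceOrbitRel_of_isUnimodular {r m : ℕ} (hSR : SatisfiesSR R r) (hm : r ≤ m + 2)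
    {x y : Fin (m + 2) → R} (hx : IsUnimodular R x) (hy : IsUnimodular R y)
    (hxy : q.ringCon.mk' ∘ x = q.ringCon.mk' ∘ y) : CongruenceOrbitRel q x y := by
  obtain ⟨F, hF, hFy⟩ := exists_mem_elementarySubgroup_mulVec_eq_single hSR hm hy
  refine CongruenceOrbitRel.of_conj hF ?_
  rw [hFy]
  refine congruenceOrbitRel_single_of_isUnimodular q hSR hm (hx.mulVec F) ?_
  rw [← hFy]
  exact mk'_comp_mulVec_congr q _ hxy

theorem rankOneTransvection_mem_of_isUnimodular {r m : ℕ} (hSR : SatisfiesSR R r)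
    (hm : r ≤ m + 2) {y g : Fin (m + 2) → R} (hy : IsUnimodular R y) (hg : ∀ k, g k ∈ q)
    (h : g ⬝ᵥ y = 0) : rankOneTransvection y g h ∈ CongruenceElementarySubgroup R (m + 2) q := by
  obtain ⟨F, hF, hFy⟩ := exists_mem_elementarySubgroup_mulVec_eq_single hSR hm hy
  have hg' : ∀ k, (g ᵥ* F⁻¹.val) k ∈ q := fun k =>
    sum_mem (t := Finset.univ) fun j _ => q.mul_mem_right _ _ (hg j)
  -- quantified over `u` because `F *ᵥ y` also occurs inside the proof argument
  have hrow : ∀ u, u = Pi.single 0 1 → ∀ h', rankOneTransvection u (g ᵥ* F⁻¹.val) h' ∈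
      CongruenceElementarySubgroup R (m + 2) q := by
    rintro _ rfl h'
    exact rankOneTransvection_single_left_mem q 0 _ hg' h'
  have hconj : F * rankOneTransvection y g h * F⁻¹ ∈ CongruenceElementarySubgroup R (m + 2) q := by
    rw [conj_rankOneTransvection]
    exact hrow _ hFy _
  simpa [mul_assoc] using conj_mem_congruenceElementarySubgroup q (inv_mem hF) hconj

end Orbits

section Complements

variable {R : Type*} [Ring R]

theorem exists_ker_eq_of_isCompl {M : Type*} [AddCommGroup M] [Module Rᵐᵒᵖ M]
    {C : Submodule Rᵐᵒᵖ M} {y : M} (hC : IsCompl C (Submodule.span Rᵐᵒᵖ {y}))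
    {φ : M →ₗ[Rᵐᵒᵖ] R} (hφ : φ y = 1) :
    ∃ δ : M →ₗ[Rᵐᵒᵖ] R, δ y = 1 ∧ LinearMap.ker δ = C := by
  let P := (Submodule.span Rᵐᵒᵖ {y}).projection C hC.symm
  refine ⟨φ ∘ₗ P, ?_, ?_⟩
  · rw [LinearMap.comp_apply, Submodule.projection_apply_of_mem_left _
      (Submodule.mem_span_singleton_self y), hφ]
  · ext v
    rw [LinearMap.mem_ker, LinearMap.comp_apply, ← Submodule.projection_apply_eq_zero_iff hC.symm]
    obtain ⟨a, ha⟩ := Submodule.mem_span_singleton.mp (Submodule.projection_apply_mem hC.symm v)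
    change φ (P v) = 0 ↔ P v = 0
    rw [← ha, map_smul, hφ]
    refine ⟨fun h => ?_, fun h => by rw [← hφ, ← map_smul, h, map_zero]⟩
    rw [MulOpposite.smul_eq_mul_unop, one_mul, MulOpposite.unop_eq_zero_iff] at h
    rw [h, zero_smul]

variable {ι : Type*} [Fintype ι] [DecidableEq ι] {δ₁ δ₂ : (ι → R) →ₗ[Rᵐᵒᵖ] R} {y : ι → R}

theorem coeffVec_sub_dotProduct_eq_zero (h₁ : δ₁ y = 1) (h₂ : δ₂ y = 1) :
    coeffVec (δ₁ - δ₂) ⬝ᵥ y = 0 := by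
  rw [coeffVec_dotProduct, LinearMap.sub_apply, h₁, h₂, sub_self]

theorem image_rankOneTransvection_ker (h₁ : δ₁ y = 1) (h₂ : δ₂ y = 1) :
    (fun v => (rankOneTransvection y (coeffVec (δ₁ - δ₂))
      (coeffVec_sub_dotProduct_eq_zero h₁ h₂)).val *ᵥ v) '' (LinearMap.ker δ₁ : Set (ι → R)) =
      LinearMap.ker δ₂ := by
  set T := rankOneTransvection y _ (coeffVec_sub_dotProduct_eq_zero h₁ h₂)
  ext v
  simp only [Set.mem_image, SetLike.mem_coe, LinearMap.mem_ker]
  constructor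
  · rintro ⟨c, hc, rfl⟩
    rw [rankOneTransvection_mulVec, map_add, map_smul, h₂, coeffVec_dotProduct,
      LinearMap.sub_apply, hc, op_smul_eq_mul, one_mul, zero_sub, add_neg_cancel]
  · intro hv
    refine ⟨T⁻¹.val *ᵥ v, ?_, by rw [mulVec_mulVec, T.mul_inv, one_mulVec]⟩
    rw [rankOneTransvection_inv_mulVec, map_sub, map_smul, h₁, coeffVec_dotProduct,
      LinearMap.sub_apply, hv, op_smul_eq_mul, one_mul, sub_zero, sub_self]

theorem sub_mem_of_image_ker_subset (q : TwoSidedIdeal R) (h₁ : δ₁ y = 1) (h₂ : δ₂ y = 1)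
    (hq : (fun (u : ι → R) (i : ι) => (u i : q.ringCon.Quotient)) ''
        (LinearMap.ker δ₁ : Set (ι → R)) ⊆
      (fun (u : ι → R) (i : ι) => (u i : q.ringCon.Quotient)) '' (LinearMap.ker δ₂))
    (v : ι → R) : δ₁ v - δ₂ v ∈ q := by
  set c := v - MulOpposite.op (δ₁ v) • y
  have hc : δ₁ c = 0 := by rw [map_sub, map_smul, h₁, op_smul_eq_mul, one_mul, sub_self]
  obtain ⟨d, hd, hdc⟩ := hq ⟨c, hc, rfl⟩
  have hcd : δ₂ (c - d) ∈ q :=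
    apply_mem_of_forall_mem q δ₂ fun i => (mk'_eq_mk'_iff q).mp (congrFun hdc i).symm
  rw [map_sub, LinearMap.mem_ker.mp hd, sub_zero, map_sub, map_smul, h₂, op_smul_eq_mul,
    one_mul] at hcd
  simpa using q.neg_mem hcd

theorem image_mulVec_ker (M : (Matrix ι ι R)ˣ) (δ : (ι → R) →ₗ[Rᵐᵒᵖ] R) :
    (fun v => M.val *ᵥ v) '' (LinearMap.ker δ : Set (ι → R)) =
      LinearMap.ker (δ ∘ₗ mulVecBilin R Rᵐᵒᵖ M⁻¹.val) := by
  ext v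
  simp only [Set.mem_image, SetLike.mem_coe, LinearMap.mem_ker, LinearMap.comp_apply,
    mulVecBilin_apply]
  constructor
  · rintro ⟨c, hc, rfl⟩
    rw [mulVec_mulVec, M.inv_mul, one_mulVec, hc]
  · intro hv
    exact ⟨_, hv, by rw [mulVec_mulVec, M.mul_inv, one_mulVec]⟩

end Complements

/-- If `R` satisfies `(SR_r)`, `n ≥ r`, `x, y ∈ Rⁿ` are unimodular with complements
`C, D`, and `x, y` (resp. `C, D`) have the same image in `(R/q)ⁿ`, then some
`M ∈ EL_n(R, q)` satisfies `M·x = y` and `M·C = D`. -/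
theorem congruenceElementary_transitive_on_split_unimodular (R : Type) [Ring R] (r n : ℕ)
    (hSR : SatisfiesSR R r) (q : TwoSidedIdeal R) (hn : r ≤ n)
    (x y : Fin n → R) (hx : IsUnimodular R x) (hy : IsUnimodular R y)
    (C D : Submodule Rᵐᵒᵖ (Fin n → R))
    (hC : IsCompl C (Submodule.span Rᵐᵒᵖ {x}))
    (hD : IsCompl D (Submodule.span Rᵐᵒᵖ {y}))
    (hxy : (fun i => (x i : q.ringCon.Quotient)) = fun i => (y i : q.ringCon.Quotient))
    (hCD : (fun (u : Fin n → R) (i : Fin n) => (u i : q.ringCon.Quotient)) ''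
             (C : Set (Fin n → R)) =
           (fun (u : Fin n → R) (i : Fin n) => (u i : q.ringCon.Quotient)) ''
             (D : Set (Fin n → R))) :
    ∃ M ∈ CongruenceElementarySubgroup R n q, M.val.mulVec x = y ∧
      (fun u : Fin n → R => M.val.mulVec u) '' (C : Set (Fin n → R)) =
        (D : Set (Fin n → R)) := by
  rcases subsingleton_or_nontrivial R with hR | hR
  · refine ⟨1, one_mem _, Subsingleton.elim _ _, ?_⟩
    ext v
    simp [Subsingleton.elim v 0]
  obtain ⟨m, rfl⟩ : ∃ m, n = m + 2 := ⟨n - 2, by have := hSR.two_le; omega⟩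
  obtain ⟨M, hM, rfl⟩ := congruenceOrbitRel_of_isUnimodular q hSR hn hx hy hxy
  obtain ⟨φ, hφ⟩ := hx
  obtain ⟨ψ, hψ⟩ := hy
  obtain ⟨δC, hδC, rfl⟩ := exists_ker_eq_of_isCompl hC hφ
  obtain ⟨δD, hδD, rfl⟩ := exists_ker_eq_of_isCompl hD hψ
  set δ := δC ∘ₗ mulVecBilin R Rᵐᵒᵖ M⁻¹.val
  have hδ : δ (M.val *ᵥ x) = 1 := by
    rw [LinearMap.comp_apply, mulVecBilin_apply, mulVec_mulVec, M.inv_mul, one_mulVec, hδC]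
  have hMC := image_mulVec_ker M δC
  have hq : ∀ k, coeffVec (δ - δD) k ∈ q := fun k =>
    sub_mem_of_image_ker_subset q hδ hδD
      (by rw [← hMC, image_reduce_image_mulVec_of_mem q hM, hCD]) _
  have hgy := coeffVec_sub_dotProduct_eq_zero hδ hδD
  have hT := rankOneTransvection_mem_of_isUnimodular q hSR hn ⟨ψ, hψ⟩ hq hgy
  refine ⟨_ * M, mul_mem hT hM, ?_, ?_⟩
  · rw [Units.val_mul, ← mulVec_mulVec, rankOneTransvection_mulVec_eq_self _ hgy]
  · simp only [Units.val_mul, ← mulVec_mulVec]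
    rw [← Set.image_image (fun v => _ *ᵥ v) (fun v => M.val *ᵥ v), hMC]
    exact image_rankOneTransvection_ker hδ hδD
end
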